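/- arXiv:2511.10349 — 8 statements merged into one kernel-verified Lean document; each statement's English description precedes it below -/
import Mathlib

section
/- In a deterministic protocol, if the auctioneer's observation does not distinguish (θ_i, θ_{-i}) from (θ_i', θ_{-i}), but does distinguish (θ_i, θ_{-i}') from (θ_i', θ_{-i}'), then bidder i's observation distinguishes (θ_i, θ_{-i}) from (θ_i, θ_{-i}'), and also distinguishes (θ_i', θ_{-i}) from (θ_i', θ_{-i}'). -/
namespace PrivacyPaper

/-- A deterministic bilateral-communication protocol: a finite rooted tree.  Each internal
node is labeled by the bidder who moves there, an information-set (question) id `q`, and a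
map from that bidder's types to the children; leaves carry outcomes. -/
inductive Protocol (n : ℕ) (Θ : Fin n → Type) (X : Type) : Type where
  | leaf (x : X) : Protocol n Θ X
  | node (i : Fin n) (q : ℕ) (k : ℕ) (act : Θ i → Fin k) (child : Fin k → Protocol n Θ X) :
      Protocol n Θ X

namespace Protocol

variable {n : ℕ} {Θ : Fin n → Type} {X : Type} {Ω : Fin n → Type}

/-- The outcome at the leaf reached by the play path of the type profile `θ`. -/
def outcome : Protocol n Θ X → ((j : Fin n) → Θ j) → X
  | .leaf x, _ => x
  | .node i _ _ act child, θ => (child (act (θ i))).outcome θ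

/-- The auctioneer's observation: the full play path, recorded as the list of
(mover, question, action) triples from the root to the leaf. -/
def oA : Protocol n Θ X → ((j : Fin n) → Θ j) → List (Fin n × ℕ × ℕ)
  | .leaf _, _ => []
  | .node i q _ act child, θ => (i, q, (act (θ i)).val) :: (child (act (θ i))).oA θ

/-- Bidder `i`'s experience: the (question, action) pairs at her own moves on the play path. -/
def experience (i : Fin n) : Protocol n Θ X → ((j : Fin n) → Θ j) → List (ℕ × ℕ)
  | .leaf _, _ => []
  | .node j q _ act child, θ =>
      (if j = i then [(q, (act (θ j)).val)] else []) ++ (child (act (θ j))).experience i θ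

/-- Bidder `i`'s observation: her own type, her experience, and her observation class
`ω i` of the final outcome. -/
def oI (P : Protocol n Θ X) (ω : (i : Fin n) → X → Ω i) (i : Fin n)
    (θ : (j : Fin n) → Θ j) : Θ i × List (ℕ × ℕ) × Ω i :=
  (θ i, P.experience i θ, ω i (P.outcome θ))

/-- All (question, action-map) pairs of bidder `i` appearing anywhere in the tree. -/
def queriesOf (i : Fin n) : Protocol n Θ X → List (ℕ × (Θ i → ℕ))
  | .leaf _ => []
  | .node j q k act child =>
      (if h : j = i then [(q, fun a => (act (cast (congrArg Θ h.symm) a)).val)] else []) ++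
        (List.finRange k).flatMap fun c => (child c).queriesOf i

/-- Measurability of strategies with respect to information sets: any two nodes of the same
bidder carrying the same question id prescribe the same action map. -/
def Consistent (P : Protocol n Θ X) : Prop :=
  ∀ i : Fin n, ∀ p ∈ P.queriesOf i, ∀ p' ∈ P.queriesOf i, p.1 = p'.1 → p.2 = p'.2

end Protocol

variable {n : ℕ} {Θ : Fin n → Type} {X : Type} {Ω : Fin n → Type}

/-- The protocol implements the choice function `φ`. -/
def Implements (P : Protocol n Θ X) (φ : ((j : Fin n) → Θ j) → X) : Prop :=
  ∀ θ, P.outcome θ = φ θ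

/-- Minimal bidder-informativeness: bidders learn nothing beyond their own type and what
they observe of the outcome. -/
def MinimallyBidderInformative (P : Protocol n Θ X) (ω : (i : Fin n) → X → Ω i)
    (φ : ((j : Fin n) → Θ j) → X) : Prop :=
  ∀ (i : Fin n) (θ θ' : (j : Fin n) → Θ j),
    θ i = θ' i → ω i (φ θ) = ω i (φ θ') → P.oI ω i θ = P.oI ω i θ'

/-- A contextual privacy violation for bidder `i` at profile `θ`. -/
def CPV (P : Protocol n Θ X) (φ : ((j : Fin n) → Θ j) → X) (i : Fin n)
    (θ : (j : Fin n) → Θ j) : Prop :=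
  ∃ a : Θ i, P.oA θ ≠ P.oA (Function.update θ i a) ∧ φ θ = φ (Function.update θ i a)

/-- `φ` violates the indistinguishable corners condition for bidder `i` at
`{a, a'} × {t, t'}`. -/
def IndistCornersViolation (φ : ((j : Fin n) → Θ j) → X) (ω : (i : Fin n) → X → Ω i)
    (i : Fin n) (a a' : Θ i) (t t' : (j : Fin n) → Θ j) : Prop :=
  φ (Function.update t i a) = φ (Function.update t i a') ∧
  ω i (φ (Function.update t i a)) = ω i (φ (Function.update t' i a)) ∧
  φ (Function.update t' i a) ≠ φ (Function.update t' i a')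

lemma mem_queriesOf_child {i j : Fin n} {q k : ℕ} {act : Θ j → Fin k}
    {child : Fin k → Protocol n Θ X} {c : Fin k} {p : ℕ × (Θ i → ℕ)}
    (h : p ∈ (child c).queriesOf i) :
    p ∈ (Protocol.node j q k act child).queriesOf i := by
  simp only [Protocol.queriesOf, List.mem_append, List.mem_flatMap]
  exact Or.inr ⟨c, List.mem_finRange c, h⟩

/-- Along a play path whose auctioneer record is unchanged by switching `i`'s type to `b`,
every question of `i` on the path has an act map taking the same value at `θ i` and `b`. -/
lemma pathA (i : Fin n) (P : Protocol n Θ X) :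
    ∀ (θ : (j : Fin n) → Θ j) (b : Θ i),
      P.oA θ = P.oA (Function.update θ i b) →
      ∀ qx ∈ P.experience i θ, ∃ f, (qx.1, f) ∈ P.queriesOf i ∧ f (θ i) = f b := by
  induction P with
  | leaf x => intro θ b _ qx hqx; simp [Protocol.experience] at hqx
  | node j q k act child ih =>
    intro θ b hA qx hqx
    rcases eq_or_ne j i with hj | hj
    · subst hj
      simp only [Protocol.oA, Function.update_self] at hA
      obtain ⟨hv, hA'⟩ := List.cons.injEq .. ▸ hA
      have hact : act (θ j) = act b := Fin.val_injective (by
        have := congrArg (fun p : Fin n × ℕ × ℕ => p.2.2) hv; simpa using this)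
      rw [show Protocol.experience j (Protocol.node j q k act child) θ =
          (q, (act (θ j)).val) :: Protocol.experience j (child (act (θ j))) θ by
        simp [Protocol.experience]] at hqx
      rcases List.mem_cons.mp hqx with hqx | hqx
      · refine ⟨fun a => (act a).val, ?_, congrArg Fin.val hact⟩
        subst hqx
        simp [Protocol.queriesOf]
      · have hA'' : (child (act (θ j))).oA θ =
            (child (act (θ j))).oA (Function.update θ j b) := by
          rw [hA', hact]
        obtain ⟨f, hf, hfe⟩ := ih (act (θ j)) θ b hA'' qx hqx
        exact ⟨f, mem_queriesOf_child hf, hfe⟩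
    · simp only [Protocol.oA, Function.update_of_ne hj] at hA
      obtain ⟨hv, hA'⟩ := List.cons.injEq .. ▸ hA
      simp only [Protocol.experience, if_neg hj, List.nil_append] at hqx
      obtain ⟨f, hf, hfe⟩ := ih (act (θ j)) θ b hA' qx hqx
      exact ⟨f, mem_queriesOf_child hf, hfe⟩

/-- Conversely, if at every question of `i` on `θ`'s path every act map carrying that
question takes the same value at `θ i` and `b`, the auctioneer record is unchanged. -/
lemma pathB (i : Fin n) (P : Protocol n Θ X) :
    ∀ (θ : (j : Fin n) → Θ j) (b : Θ i),
      (∀ qx ∈ P.experience i θ, ∀ f, (qx.1, f) ∈ P.queriesOf i → f (θ i) = f b) →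
      P.oA θ = P.oA (Function.update θ i b) := by
  induction P with
  | leaf x => intro θ b _; simp [Protocol.oA]
  | node j q k act child ih =>
    intro θ b H
    rcases eq_or_ne j i with hj | hj
    · subst hj
      have hmemq : ((q, fun a => (act a).val) : ℕ × (Θ j → ℕ)) ∈
          (Protocol.node j q k act child).queriesOf j := by
        simp [Protocol.queriesOf]
      have hmeme : ((q, (act (θ j)).val) : ℕ × ℕ) ∈
          (Protocol.node j q k act child).experience j θ := by
        simp [Protocol.experience]
      have hval : (act (θ j)).val = (act b).val :=
        H _ hmeme (fun a => (act a).val) hmemq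
      have hact : act (θ j) = act b := Fin.val_injective hval
      simp only [Protocol.oA, Function.update_self, ← hact]
      refine congrArg _ (ih (act (θ j)) θ b ?_)
      intro qx hqx f hf
      refine H qx ?_ f (mem_queriesOf_child hf)
      simp only [Protocol.experience, List.mem_append, List.mem_cons]
      exact Or.inr hqx
    · simp only [Protocol.oA, Function.update_of_ne hj]
      refine congrArg _ (ih (act (θ j)) θ b ?_)
      intro qx hqx f hf
      refine H qx ?_ f (mem_queriesOf_child hf)
      simpa only [Protocol.experience, if_neg hj, List.nil_append] using hqx

lemma transfer (P : Protocol n Θ X) (hP : P.Consistent) (i : Fin n)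
    (θ θ' : (j : Fin n) → Θ j) (b : Θ i) (hii : θ i = θ' i)
    (hexp : P.experience i θ = P.experience i θ')
    (hA : P.oA θ = P.oA (Function.update θ i b)) :
    P.oA θ' = P.oA (Function.update θ' i b) := by
  apply pathB
  intro qx hm f hf
  obtain ⟨f0, hf0, hval⟩ := pathA i P θ b hA qx (hexp ▸ hm)
  have hff0 : f = f0 := hP i (qx.1, f) hf (qx.1, f0) hf0 rfl
  rw [hff0, ← hii]
  exact hval

/-- If the auctioneer does not distinguish `(a, t)` from `(a', t)` but does distinguish
`(a, t')` from `(a', t')`, then bidder `i` distinguishes `(a, t)` from `(a, t')` and also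
distinguishes `(a', t)` from `(a', t')`. -/
theorem bidder_distinguishes_rows
    {n : ℕ} {Θ : Fin n → Type} {X : Type} {Ω : Fin n → Type}
    (P : Protocol n Θ X) (hP : P.Consistent) (ω : (i : Fin n) → X → Ω i)
    (i : Fin n) (a a' : Θ i) (t t' : (j : Fin n) → Θ j)
    (h1 : P.oA (Function.update t i a) = P.oA (Function.update t i a'))
    (h2 : P.oA (Function.update t' i a) ≠ P.oA (Function.update t' i a')) :
    P.oI ω i (Function.update t i a) ≠ P.oI ω i (Function.update t' i a) ∧
    P.oI ω i (Function.update t i a') ≠ P.oI ω i (Function.update t' i a') := by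
  have hupd1 : Function.update (Function.update t i a) i a' = Function.update t i a' :=
    Function.update_idem ..
  have hupd1' : Function.update (Function.update t' i a) i a' = Function.update t' i a' :=
    Function.update_idem ..
  have hupd2 : Function.update (Function.update t i a') i a = Function.update t i a :=
    Function.update_idem ..
  have hupd2' : Function.update (Function.update t' i a') i a = Function.update t' i a :=
    Function.update_idem ..
  constructor
  · intro h
    have hexp : P.experience i (Function.update t i a) =
        P.experience i (Function.update t' i a) :=
      congrArg (fun p : Θ i × List (ℕ × ℕ) × Ω i => p.2.1) h
    have := transfer P hP i (Function.update t i a) (Function.update t' i a) a'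
      (by simp) hexp (by rw [hupd1]; exact h1)
    rw [hupd1'] at this
    exact h2 this
  · intro h
    have hexp : P.experience i (Function.update t i a') =
        P.experience i (Function.update t' i a') :=
      congrArg (fun p : Θ i × List (ℕ × ℕ) × Ω i => p.2.1) h
    have := transfer P hP i (Function.update t i a') (Function.update t' i a') a
      (by simp) hexp (by rw [hupd2]; exact h1.symm)
    rw [hupd2'] at this
    exact h2 this.symm

end PrivacyPaper
end

section
/- (Impossibility Theorem) Suppose a choice function φ violates the indistinguishable corners condition for bidder i at some type profiles. Then no deterministic protocol implementing φ can simultaneously (i) produce no contextual privacy violations for bidder i, and (ii) be minimally bidder-informative. -/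
namespace PrivacyPaper

variable {n : ℕ} {Θ : Fin n → Type} {X : Type} {Ω : Fin n → Type}

lemma outcome_congr (i : Fin n) (P : Protocol n Θ X) :
    ∀ (θ θ' : (j : Fin n) → Θ j), (∀ j, j ≠ i → θ j = θ' j) →
    (∀ q f, (q, f) ∈ P.queriesOf i → q ∈ (P.experience i θ).map Prod.fst →
      f (θ i) = f (θ' i)) →
    P.outcome θ = P.outcome θ' := by
  induction P with
  | leaf x => intro _ _ _ _; rfl
  | node j q k act child ih =>
    intro θ θ' hoff h
    by_cases hj : j = i
    · subst hj
      have hq : (q, fun a => (act a).val) ∈ (Protocol.node j q k act child).queriesOf j := by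
        simp [Protocol.queriesOf]
      have hmem : q ∈ ((Protocol.node j q k act child).experience j θ).map Prod.fst := by
        simp [Protocol.experience]
      have hval : (act (θ j)).val = (act (θ' j)).val := h q _ hq hmem
      have hact : act (θ j) = act (θ' j) := Fin.val_injective hval
      show (child (act (θ j))).outcome θ = (child (act (θ' j))).outcome θ'
      rw [← hact]
      refine ih (act (θ j)) θ θ' hoff ?_
      intro q' f' hq'f' hq'
      refine h q' f' ?_ ?_
      · simp only [Protocol.queriesOf, dif_pos rfl]
        refine List.mem_append_right _ ?_
        exact List.mem_flatMap.2 ⟨act (θ j), List.mem_finRange _, hq'f'⟩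
      · simp only [Protocol.experience, if_pos rfl, List.map_append]
        exact List.mem_append_right _ hq'
    · have hθj : θ j = θ' j := hoff j hj
      show (child (act (θ j))).outcome θ = (child (act (θ' j))).outcome θ'
      rw [← hθj]
      refine ih (act (θ j)) θ θ' hoff ?_
      intro q' f' hq'f' hq'
      refine h q' f' ?_ ?_
      · simp only [Protocol.queriesOf, dif_neg hj, List.nil_append]
        exact List.mem_flatMap.2 ⟨act (θ j), List.mem_finRange _, hq'f'⟩
      · simpa only [Protocol.experience, if_neg hj, List.nil_append] using hq'

lemma exp_queries (i : Fin n) (P : Protocol n Θ X) :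
    ∀ (θ θ' : (j : Fin n) → Θ j), P.oA θ = P.oA θ' →
    ∀ q ∈ (P.experience i θ).map Prod.fst,
      ∃ f, (q, f) ∈ P.queriesOf i ∧ f (θ i) = f (θ' i) := by
  induction P with
  | leaf x => intro θ θ' _ q hq; simp [Protocol.experience] at hq
  | node j q0 k act child ih =>
    intro θ θ' hA q hq
    have hA' := hA
    simp only [Protocol.oA, List.cons.injEq, Prod.mk.injEq, true_and] at hA'
    obtain ⟨hval, htail⟩ := hA'
    have hact : act (θ j) = act (θ' j) := Fin.val_injective hval
    rw [← hact] at htail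
    by_cases hj : j = i
    · subst hj
      simp only [Protocol.experience, if_pos rfl, List.map_append, List.mem_append,
        List.map_cons, List.map_nil, List.mem_singleton, if_true] at hq
      rcases hq with hq | hq
      · refine ⟨fun a => (act a).val, ?_, ?_⟩
        · subst hq; simp [Protocol.queriesOf]
        · exact hval
      · obtain ⟨f, hf1, hf2⟩ := ih (act (θ j)) θ θ' htail q hq
        refine ⟨f, ?_, hf2⟩
        simp only [Protocol.queriesOf, dif_pos rfl]
        refine List.mem_append_right _ ?_
        exact List.mem_flatMap.2 ⟨act (θ j), List.mem_finRange _, hf1⟩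
    · simp only [Protocol.experience, if_neg hj, List.nil_append] at hq
      obtain ⟨f, hf1, hf2⟩ := ih (act (θ j)) θ θ' htail q hq
      refine ⟨f, ?_, hf2⟩
      simp only [Protocol.queriesOf, dif_neg hj, List.nil_append]
      exact List.mem_flatMap.2 ⟨act (θ j), List.mem_finRange _, hf1⟩

/-- Impossibility theorem: if `φ` violates the indistinguishable corners condition for
bidder `i` at some type profiles, then no protocol implementing `φ` both produces no
contextual privacy violations for bidder `i` and is minimally bidder-informative. -/
theorem impossibility
    {n : ℕ} {Θ : Fin n → Type} {X : Type} {Ω : Fin n → Type}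
    (P : Protocol n Θ X) (hP : P.Consistent) (ω : (i : Fin n) → X → Ω i)
    (φ : ((j : Fin n) → Θ j) → X)
    (himp : Implements P φ)
    (i : Fin n)
    (hviol : ∃ (a a' : Θ i) (t t' : (j : Fin n) → Θ j),
      IndistCornersViolation φ ω i a a' t t') :
    ¬ ((∀ θ : (j : Fin n) → Θ j, ¬ CPV P φ i θ) ∧ MinimallyBidderInformative P ω φ) := by
  rintro ⟨hnc, hmbi⟩
  obtain ⟨a, a', t, t', h1, h2, h3⟩ := hviol
  have hoA : P.oA (Function.update t i a) = P.oA (Function.update t i a') := by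
    by_contra hne
    refine hnc (Function.update t i a) ⟨a', ?_, ?_⟩
    · rwa [Function.update_idem]
    · rwa [Function.update_idem]
  have hOI := hmbi i (Function.update t i a) (Function.update t' i a)
    (by simp) h2
  have hexp : P.experience i (Function.update t i a)
      = P.experience i (Function.update t' i a) := congrArg (fun p => p.2.1) hOI
  apply h3
  rw [← himp, ← himp]
  refine outcome_congr i P _ _ (fun j hj => by simp [Function.update_of_ne hj]) ?_
  intro q f hqf hqexp
  rw [← hexp] at hqexp
  obtain ⟨f0, hf0mem, hf0eq⟩ :=
    exp_queries i P (Function.update t i a) (Function.update t i a') hoA q hqexp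
  have hff0 : f = f0 := hP i (q, f) hqf (q, f0) hf0mem rfl
  simp only [Function.update_self]
  rw [hff0]
  simpa using hf0eq

end PrivacyPaper
end

section
/- The sealed-bid protocol is minimally bidder-informative: for every bidder i and all type profiles θ, θ' with θ_i = θ_i' and ω_i(φ(θ)) = ω_i(φ(θ')), bidder i's observation satisfies o_i(θ) = o_i(θ'). Moreover, no protocol reveals strictly less to bidder i: in any deterministic protocol P implementing φ, if o_i^P(θ) = o_i^P(θ') then θ_i = θ_i' and ω_i(φ(θ)) = ω_i(φ(θ')). -/
namespace PrivacyPaper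

variable {n : ℕ} {Θ : Fin n → Type} {X : Type} {Ω : Fin n → Type}

/-- Auxiliary construction for the sealed-bid protocol: query the remaining `r` bidders
`n - r, …, n - 1` in order, then output the outcome of the accumulated reports. -/
noncomputable def sealedAux {n : ℕ} {Θ : Fin n → Type} {X : Type}
    [∀ i, Fintype (Θ i)] [∀ i, Nonempty (Θ i)] :
    (r : ℕ) → r ≤ n → (((j : Fin n) → Θ j) → X) → Protocol n Θ X
  | 0, _, f => .leaf (f fun j => Classical.arbitrary (Θ j))
  | r + 1, hr, f =>
      let i : Fin n := ⟨n - (r + 1), by omega⟩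
      .node i i.val (Fintype.card (Θ i)) (Fintype.equivFin (Θ i))
        (fun c => sealedAux r (by omega) fun θ =>
          f (Function.update θ i ((Fintype.equivFin (Θ i)).symm c)))

/-- The sealed-bid protocol for `φ`: each bidder directly reports her type, in the fixed
order `1, 2, …, n`, and the outcome `φ` of the reports is selected. -/
noncomputable def sealedBid {n : ℕ} {Θ : Fin n → Type} {X : Type}
    [∀ i, Fintype (Θ i)] [∀ i, Nonempty (Θ i)]
    (φ : ((j : Fin n) → Θ j) → X) : Protocol n Θ X :=
  sealedAux n le_rfl φ

lemma sealedAux_outcome {n : ℕ} {Θ : Fin n → Type} {X : Type}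
    [∀ i, Fintype (Θ i)] [∀ i, Nonempty (Θ i)] :
    ∀ (r : ℕ) (h : r ≤ n) (f : ((j : Fin n) → Θ j) → X) (θ : (j : Fin n) → Θ j),
      (sealedAux r h f).outcome θ =
        f (fun j => if n - r ≤ j.val then θ j else Classical.arbitrary (Θ j)) := by
  intro r
  induction r with
  | zero =>
    intro h f θ
    simp [sealedAux, Protocol.outcome]
    congr 1
    funext j
    rw [if_neg (by omega)]
  | succ r ih =>
    intro h f θ
    simp only [sealedAux, Protocol.outcome]
    rw [ih]
    simp only [Equiv.symm_apply_apply]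
    congr 1
    funext j
    by_cases hj : j = (⟨n - (r + 1), by omega⟩ : Fin n)
    · subst hj
      rw [Function.update_self, if_pos (by simp)]
    · rw [Function.update_of_ne hj]
      have hv : j.val ≠ n - (r + 1) := fun hc => hj (Fin.ext hc)
      by_cases h1 : n - r ≤ j.val
      · rw [if_pos h1, if_pos (by omega)]
      · rw [if_neg h1, if_neg (by omega)]

lemma sealedAux_experience {n : ℕ} {Θ : Fin n → Type} {X : Type}
    [∀ i, Fintype (Θ i)] [∀ i, Nonempty (Θ i)] (i : Fin n) :
    ∀ (r : ℕ) (h : r ≤ n) (f : ((j : Fin n) → Θ j) → X) (θ : (j : Fin n) → Θ j),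
      (sealedAux r h f).experience i θ =
        if n - r ≤ i.val then [(i.val, (Fintype.equivFin (Θ i) (θ i)).val)] else [] := by
  intro r
  induction r with
  | zero =>
    intro h f θ
    simp [sealedAux, Protocol.experience]
  | succ r ih =>
    intro h f θ
    simp only [sealedAux, Protocol.experience]
    rw [ih]
    by_cases hj : (⟨n - (r + 1), by omega⟩ : Fin n) = i
    · subst hj
      simp only [if_pos rfl, Fin.val_mk]
      rw [if_neg (show ¬ n - r ≤ n - (r + 1) by omega), if_pos (le_refl _)]
      simp
    · rw [if_neg hj]
      have hv : i.val ≠ n - (r + 1) := by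
        intro hc; exact hj (Fin.ext hc.symm)
      by_cases h1 : n - r ≤ i.val
      · rw [if_pos h1, if_pos (by omega)]; simp
      · rw [if_neg h1, if_neg (by omega)]; simp

lemma sealedBid_outcome {n : ℕ} {Θ : Fin n → Type} {X : Type}
    [∀ i, Fintype (Θ i)] [∀ i, Nonempty (Θ i)]
    (φ : ((j : Fin n) → Θ j) → X) (θ : (j : Fin n) → Θ j) :
    (sealedBid φ).outcome θ = φ θ := by
  rw [sealedBid, sealedAux_outcome]
  congr 1
  funext j
  rw [if_pos (by omega)]

/-- The sealed-bid protocol is minimally bidder-informative, and no protocol implementing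
`φ` reveals strictly less to any bidder: whenever a bidder's observations agree, her type
and her observation of the outcome agree. -/
theorem sealedBid_minimally_bidder_informative
    {n : ℕ} {Θ : Fin n → Type} [∀ i, Fintype (Θ i)] [∀ i, Nonempty (Θ i)]
    {X : Type} {Ω : Fin n → Type}
    (φ : ((j : Fin n) → Θ j) → X) (ω : (i : Fin n) → X → Ω i) :
    MinimallyBidderInformative (sealedBid φ) ω φ ∧
    ∀ (P : Protocol n Θ X), Implements P φ →
      ∀ (i : Fin n) (θ θ' : (j : Fin n) → Θ j),
        P.oI ω i θ = P.oI ω i θ' → θ i = θ' i ∧ ω i (φ θ) = ω i (φ θ') := by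
  constructor
  · intro i θ θ' hi hω
    unfold Protocol.oI
    rw [sealedBid_outcome, sealedBid_outcome]
    rw [sealedBid, sealedAux_experience, sealedAux_experience, hi, hω]
  · intro P hP i θ θ' h
    unfold Protocol.oI at h
    rw [hP θ, hP θ'] at h
    exact ⟨congrArg Prod.fst h, congrArg (Prod.snd ∘ Prod.snd) h⟩

end PrivacyPaper
end

section
/- The first-price auction choice rule with truthful bidding and lowest-index tie-breaking satisfies the corners condition: there exist no bidder i and type profiles {θ_i, θ_i'} × {θ_{-i}, θ_{-i}'} such that φ^{FPA}(θ_i,θ_{-i}) = φ^{FPA}(θ_i',θ_{-i}) = φ^{FPA}(θ_i,θ_{-i}') ≠ φ^{FPA}(θ_i',θ_{-i}'). -/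
namespace PrivacyPaper

open Classical in
/-- The lowest-indexed bidder with the maximum value. -/
noncomputable def lowWinner {n : ℕ} (hn : 0 < n) (θ : Fin n → ℝ) : Fin n :=
  (Finset.univ.filter fun i => ∀ j, θ j ≤ θ i).min' (by
    haveI : Nonempty (Fin n) := ⟨⟨0, hn⟩⟩
    obtain ⟨i, hi⟩ := Finite.exists_max θ
    exact ⟨i, Finset.mem_filter.mpr ⟨Finset.mem_univ i, hi⟩⟩)

/-- The first-price auction choice rule with truthful bidding and lowest-index
tie-breaking: the winner gets the good and pays her value, losers get `(false, 0)`. -/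
noncomputable def FPA {n : ℕ} (hn : 0 < n) (θ : Fin n → ℝ) : Fin n → Bool × ℝ :=
  fun j => if j = lowWinner hn θ then (true, θ j) else (false, 0)

lemma erase_univ_nonempty {n : ℕ} (hn : 2 ≤ n) (i : Fin n) :
    ((Finset.univ : Finset (Fin n)).erase i).Nonempty := by
  rw [← Finset.card_pos, Finset.card_erase_of_mem (Finset.mem_univ _), Finset.card_univ,
    Fintype.card_fin]
  omega

/-- The highest value among bidders other than `i`. -/
noncomputable def maxOther {n : ℕ} (hn : 2 ≤ n) (i : Fin n) (θ : Fin n → ℝ) : ℝ :=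
  ((Finset.univ : Finset (Fin n)).erase i).sup' (erase_univ_nonempty hn i) θ

/-- The second-price auction choice rule with lowest-index tie-breaking: the winner gets
the good and pays the highest value among the other bidders, losers get `(false, 0)`. -/
noncomputable def SPA {n : ℕ} (hn : 2 ≤ n) (θ : Fin n → ℝ) : Fin n → Bool × ℝ :=
  fun j =>
    if j = lowWinner (by omega) θ then
      (true, maxOther hn (lowWinner (by omega : 0 < n) θ) θ)
    else (false, 0)

lemma lowWinner_max {n : ℕ} (hn : 0 < n) (θ : Fin n → ℝ) (j : Fin n) :
    θ j ≤ θ (lowWinner hn θ) := by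
  have h := Finset.min'_mem (Finset.univ.filter fun i => ∀ j, θ j ≤ θ i)
    (by
      haveI : Nonempty (Fin n) := ⟨⟨0, hn⟩⟩
      obtain ⟨i, hi⟩ := Finite.exists_max θ
      exact ⟨i, Finset.mem_filter.mpr ⟨Finset.mem_univ i, hi⟩⟩)
  rw [Finset.mem_filter] at h
  exact h.2 j

lemma lowWinner_min {n : ℕ} (hn : 0 < n) (θ : Fin n → ℝ) (j : Fin n)
    (hj : ∀ k, θ k ≤ θ j) : lowWinner hn θ ≤ j :=
  Finset.min'_le _ _ (Finset.mem_filter.mpr ⟨Finset.mem_univ j, hj⟩)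

lemma FPA_eq_iff {n : ℕ} (hn : 0 < n) (θ θ' : Fin n → ℝ) :
    FPA hn θ = FPA hn θ' ↔
      lowWinner hn θ = lowWinner hn θ' ∧ θ (lowWinner hn θ) = θ' (lowWinner hn θ) := by
  constructor
  · intro h
    have h1 := congrFun h (lowWinner hn θ)
    simp only [FPA, if_pos rfl] at h1
    by_cases hw : lowWinner hn θ = lowWinner hn θ'
    · rw [if_pos hw] at h1
      exact ⟨hw, (Prod.mk.injEq _ _ _ _ ▸ h1).2⟩
    · rw [if_neg hw] at h1
      simp at h1
  · rintro ⟨hw, hv⟩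
    funext j
    simp only [FPA]
    by_cases hj : j = lowWinner hn θ
    · rw [if_pos hj, if_pos (hw ▸ hj), hj, hv]
    · rw [if_neg hj, if_neg (fun h => hj (h.trans hw.symm))]

/-- The first-price auction choice rule satisfies the standard corners condition: there is
no bidder `i` and no profiles `{a, a'} × {t, t'}` with
`φ (a,t) = φ (a',t) = φ (a,t') ≠ φ (a',t')`. -/
theorem fpa_satisfies_corners_condition {n : ℕ} (hn : 2 ≤ n)
    (Θi : Fin n → Finset ℝ) (hpos : ∀ i, ∀ x ∈ Θi i, 0 ≤ x) :
    ¬ ∃ (i : Fin n) (a a' : ℝ) (t t' : Fin n → ℝ),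
      a ∈ Θi i ∧ a' ∈ Θi i ∧ (∀ j, t j ∈ Θi j) ∧ (∀ j, t' j ∈ Θi j) ∧
      FPA (by omega) (Function.update t i a) = FPA (by omega) (Function.update t i a') ∧
      FPA (by omega) (Function.update t i a) = FPA (by omega) (Function.update t' i a) ∧
      FPA (by omega) (Function.update t' i a) ≠ FPA (by omega) (Function.update t' i a') := by
  rintro ⟨i, a, a', t, t', -, -, -, -, h12, h13, h34⟩
  have hn' : 0 < n := by omega
  set θ1 := Function.update t i a with hθ1
  set θ2 := Function.update t i a' with hθ2
  set θ3 := Function.update t' i a with hθ3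
  set θ4 := Function.update t' i a' with hθ4
  rw [FPA_eq_iff] at h12 h13
  obtain ⟨hw12, hv12⟩ := h12
  obtain ⟨hw13, hv13⟩ := h13
  set w := lowWinner hn' θ1 with hw
  by_cases hwi : w = i
  · -- winner is i, so a = a' and θ3 = θ4
    have haa : a = a' := by
      have h1 : θ1 w = a := by rw [hwi]; simp [hθ1]
      have h2 : θ2 w = a' := by rw [hwi]; simp [hθ2]
      rw [h1, h2] at hv12
      exact hv12
    exact h34 (by rw [hθ3, hθ4, haa])
  · -- winner w ≠ i
    have hθ1w : θ1 w = t w := Function.update_of_ne hwi _ _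
    have hθ2w : θ2 w = t w := Function.update_of_ne hwi _ _
    have hθ3w : θ3 w = t' w := Function.update_of_ne hwi _ _
    have hθ4w : θ4 w = t' w := Function.update_of_ne hwi _ _
    have htw : t w = t' w := by rw [← hθ1w, ← hθ3w]; exact hv13
    -- a' ≤ t w, since w wins θ2 and θ2 i = a'
    have ha' : a' ≤ t w := by
      have := lowWinner_max hn' θ2 i
      rw [← hw12] at this
      simpa [hθ2, Function.update_self, Function.update_of_ne hwi] using this
    -- w is an argmax of θ4
    have hargmax4 : ∀ k, θ4 k ≤ θ4 w := by
      intro k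
      by_cases hki : k = i
      · rw [hki, hθ4w, ← htw]
        simpa [hθ4] using ha'
      · have h3k := lowWinner_max hn' θ3 k
        rw [← hw13] at h3k
        calc θ4 k = θ3 k := by
              rw [hθ4, hθ3, Function.update_of_ne hki, Function.update_of_ne hki]
          _ ≤ θ3 w := h3k
          _ = θ4 w := by rw [hθ3w, hθ4w]
    -- lowWinner θ4 ≤ w
    have hle : lowWinner hn' θ4 ≤ w := lowWinner_min hn' θ4 w hargmax4
    -- w ≤ lowWinner θ4
    have hge : w ≤ lowWinner hn' θ4 := by
      set v := lowWinner hn' θ4 with hv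
      by_cases hvi : v = i
      · -- θ4 v = a', and a' ≥ θ4 w = t' w = t w, together with ha' : a' = t w
        have h1 : θ4 w ≤ θ4 v := lowWinner_max hn' θ4 w
        have ha'eq : a' = t w := by
          have : t' w ≤ a' := by rwa [hθ4w, hvi, hθ4, Function.update_self] at h1
          linarith
        -- then i is an argmax of θ2, so w = lowWinner θ2 ≤ i = v
        have : lowWinner hn' θ2 ≤ i := by
          apply lowWinner_min
          intro k
          have hk := lowWinner_max hn' θ2 k
          rw [← hw12] at hk
          calc θ2 k ≤ θ2 w := hk
            _ = θ2 i := by rw [hθ2w, hθ2, Function.update_self, ha'eq]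
        rw [← hw12] at this
        rw [hvi]
        exact this
      · -- v ≠ i : v is an argmax of θ3, so w = lowWinner θ3 ≤ v
        have : lowWinner hn' θ3 ≤ v := by
          apply lowWinner_min
          intro k
          have hθ3v : θ3 v = θ4 v := by
            rw [hθ3, hθ4, Function.update_of_ne hvi, Function.update_of_ne hvi]
          by_cases hki : k = i
          · have h1 : θ3 k = a := by rw [hki, hθ3, Function.update_self]
            have h2 : a ≤ θ3 w := by
              have := lowWinner_max hn' θ3 i
              rw [← hw13] at this
              rwa [hθ3, Function.update_self] at this
            have h3 : θ3 w = θ4 w := by rw [hθ3w, hθ4w]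
            have h4 : θ4 w ≤ θ4 v := lowWinner_max hn' θ4 w
            rw [h1, hθ3v]
            exact h2.trans (h3 ▸ h4)
          · have h1 : θ3 k = θ4 k := by
              rw [hθ3, hθ4, Function.update_of_ne hki, Function.update_of_ne hki]
            rw [h1, hθ3v]
            exact lowWinner_max hn' θ4 k
        rw [← hw13] at this
        exact this
    have hwin4 : lowWinner hn' θ4 = w := le_antisymm hle hge
    apply h34
    rw [FPA_eq_iff]
    refine ⟨by rw [← hw13, hwin4], ?_⟩
    rw [← hw13, hθ3w, hθ4w]

end PrivacyPaper
end

section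
/- Any minimally bidder-informative deterministic protocol implementing the first-price auction choice rule with truthful bidding on a common finite type space must give the auctioneer the discrete partition: for all type profiles θ ≠ θ', the auctioneer's observations differ, o_A(θ) ≠ o_A(θ'). -/
namespace PrivacyPaper

variable {n : ℕ} {Θ : Fin n → Type} {X : Type} {Ω : Fin n → Type}

/- ==== Auxiliary protocol lemmas ==== -/

section Aux

variable {n : ℕ} {α X : Type}

lemma mem_queries_child {i j : Fin n} {q k : ℕ} {act : α → Fin k}
    {child : Fin k → Protocol n (fun _ => α) X} {p : ℕ × (α → ℕ)} (c : Fin k)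
    (hp : p ∈ (child c).queriesOf i) :
    p ∈ (Protocol.node j q k act child).queriesOf i := by
  unfold Protocol.queriesOf
  exact List.mem_append.mpr (Or.inr (List.mem_flatMap.mpr ⟨c, List.mem_finRange c, hp⟩))

lemma oA_mix (T : Protocol n (fun _ => α) X) (θ θ' θ'' : Fin n → α)
    (h : T.oA θ = T.oA θ') (hmix : ∀ j, θ'' j = θ j ∨ θ'' j = θ' j) :
    T.oA θ'' = T.oA θ ∧ T.outcome θ'' = T.outcome θ := by
  induction T with
  | leaf x => exact ⟨rfl, rfl⟩
  | node j q k act child ih =>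
    simp only [Protocol.oA, List.cons.injEq, Prod.mk.injEq] at h
    have hact : act (θ' j) = act (θ j) := Fin.ext h.1.2.2.symm
    have hact'' : act (θ'' j) = act (θ j) := by
      rcases hmix j with h' | h'
      · rw [h']
      · rw [h', hact]
    have htail : (child (act (θ j))).oA θ = (child (act (θ j))).oA θ' := by
      have h2 := h.2; rwa [hact] at h2
    have := ih (act (θ j)) htail
    constructor
    · simp only [Protocol.oA, hact'', this.1]
    · simp only [Protocol.outcome, hact'', this.2]

lemma exp_eq_of_oA (i : Fin n) (T : Protocol n (fun _ => α) X) (θ θ' : Fin n → α)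
    (h : T.oA θ = T.oA θ') : T.experience i θ = T.experience i θ' := by
  induction T with
  | leaf x => rfl
  | node j q k act child ih =>
    simp only [Protocol.oA, List.cons.injEq, Prod.mk.injEq] at h
    have hact : act (θ j) = act (θ' j) := Fin.ext h.1.2.2
    have htail : (child (act (θ' j))).oA θ = (child (act (θ' j))).oA θ' := by
      have h2 := h.2; rwa [hact] at h2
    simp only [Protocol.experience]
    rw [hact, ih (act (θ' j)) htail]

/-- Along a path shared by `θ` and `θ'`, every question `i` experiences has
an action map agreeing on `θ i` and `θ' i` (using consistency). -/
lemma act_agree (P : Protocol n (fun _ => α) X) (hP : P.Consistent) (i : Fin n) :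
    ∀ (T : Protocol n (fun _ => α) X),
      (∀ p ∈ T.queriesOf i, p ∈ P.queriesOf i) →
      ∀ (θ θ' : Fin n → α), T.oA θ = T.oA θ' →
      ∀ q v, (q, v) ∈ T.experience i θ →
      ∀ f, (q, f) ∈ P.queriesOf i → f (θ i) = f (θ' i) := by
  intro T
  induction T with
  | leaf x => intro _ θ θ' _ q v hv; simp [Protocol.experience] at hv
  | node j q0 k act child ih =>
    intro hsub θ θ' hoA q v hv f hf
    simp only [Protocol.oA, List.cons.injEq, Prod.mk.injEq] at hoA
    have hact : act (θ j) = act (θ' j) := Fin.ext hoA.1.2.2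
    have htail : (child (act (θ j))).oA θ = (child (act (θ j))).oA θ' := by
      have h2 := hoA.2; rwa [← hact] at h2
    simp only [Protocol.experience, List.mem_append] at hv
    rcases hv with hv | hv
    · by_cases hji : j = i
      · subst hji
        rw [if_pos rfl] at hv
        simp only [List.mem_singleton, Prod.mk.injEq] at hv
        have hmem : (q0, fun a : α => (act (cast (congrArg (fun _ : Fin n => α) (rfl : j = j).symm) a)).val)
            ∈ (Protocol.node j q0 k act child).queriesOf j := by
          unfold Protocol.queriesOf
          simp
        have hmemP := hsub _ hmem
        have hcast : ∀ a : α, (cast (congrArg (fun _ : Fin n => α) (rfl : j = j).symm) a) = a :=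
          fun a => eq_of_heq (cast_heq _ _)
        have hfeq := hP j _ hmemP _ hf hv.1.symm
        have hf0 : ∀ a : α, f a = (act a).val := by
          intro a
          have := congrFun hfeq.symm a
          simpa [hcast a] using this
        rw [hf0, hf0, hact]
      · simp [hji] at hv
    · exact ih (act (θ j)) (fun p hp => hsub p (mem_queries_child _ hp)) θ θ' htail q v hv f hf

/-- If two profiles agree off `i` and every question along the `σ`-path
has an action map agreeing on `σ i` and `σ' i`, the outcomes coincide. -/
lemma outcome_eq_of_agree (P : Protocol n (fun _ => α) X) (hP : P.Consistent) (i : Fin n) :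
    ∀ (T : Protocol n (fun _ => α) X),
      (∀ p ∈ T.queriesOf i, p ∈ P.queriesOf i) →
      ∀ (σ σ' : Fin n → α), (∀ j, j ≠ i → σ j = σ' j) →
      (∀ q v, (q, v) ∈ T.experience i σ →
        ∀ f, (q, f) ∈ P.queriesOf i → f (σ i) = f (σ' i)) →
      T.outcome σ = T.outcome σ' := by
  intro T
  induction T with
  | leaf x => intros; rfl
  | node j q0 k act child ih =>
    intro hsub σ σ' hoff H
    by_cases hji : j = i
    · subst hji
      have hmem : (q0, fun a : α => (act (cast (congrArg (fun _ : Fin n => α) (rfl : j = j).symm) a)).val)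
          ∈ (Protocol.node j q0 k act child).queriesOf j := by
        unfold Protocol.queriesOf; simp
      have hmemP := hsub _ hmem
      have hcast : ∀ a : α, (cast (congrArg (fun _ : Fin n => α) (rfl : j = j).symm) a) = a :=
        fun a => eq_of_heq (cast_heq _ _)
      have hhead : (q0, (act (σ j)).val) ∈ (Protocol.node j q0 k act child).experience j σ := by
        simp [Protocol.experience]
      have := H q0 _ hhead _ hmemP
      simp only [hcast] at this
      have hact : act (σ j) = act (σ' j) := Fin.ext this
      simp only [Protocol.outcome, ← hact]
      refine ih (act (σ j)) (fun p hp => hsub p (mem_queries_child _ hp)) σ σ' hoff ?_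
      intro q v hv f hf
      refine H q v ?_ f hf
      simp only [Protocol.experience, List.mem_append]
      exact Or.inr hv
    · have hact : act (σ j) = act (σ' j) := by rw [hoff j hji]
      simp only [Protocol.outcome, ← hact]
      refine ih (act (σ j)) (fun p hp => hsub p (mem_queries_child _ hp)) σ σ' hoff ?_
      intro q v hv f hf
      refine H q v ?_ f hf
      simp only [Protocol.experience, List.mem_append, if_neg hji]
      simpa using hv

end Aux

/- ==== lowWinner lemmas ==== -/

section FPAAux

variable {n : ℕ} (hn0 : 0 < n)

lemma le_lowWinner (v : Fin n → ℝ) (j : Fin n) : v j ≤ v (lowWinner hn0 v) := by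
  have hmem : lowWinner hn0 v ∈ Finset.univ.filter fun i => ∀ j, v j ≤ v i :=
    Finset.min'_mem _ _
  rw [Finset.mem_filter] at hmem
  exact hmem.2 j

lemma lowWinner_le (v : Fin n → ℝ) (j : Fin n) (hj : ∀ k, v k ≤ v j) :
    lowWinner hn0 v ≤ j :=
  Finset.min'_le _ j (Finset.mem_filter.mpr ⟨Finset.mem_univ j, hj⟩)

lemma lowWinner_strict (v : Fin n → ℝ) (i : Fin n) (h : ∀ j, j ≠ i → v j < v i) :
    lowWinner hn0 v = i := by
  by_contra hne
  have h1 := le_lowWinner hn0 v i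
  have h2 := h _ hne
  exact absurd h1 (not_le.mpr h2)

lemma lowWinner_const (c : ℝ) : lowWinner hn0 (fun _ => c) = ⟨0, hn0⟩ := by
  refine le_antisymm (lowWinner_le hn0 _ _ fun k => le_refl c) ?_
  exact Fin.mk_le_of_le_val (Nat.zero_le _)

end FPAAux

/- ==== Core lemma ==== -/

section Core

variable {n : ℕ}

/-- Coercion of a subtype profile to a real-valued profile. -/
def cvv {n : ℕ} {Θ : Finset ℝ} (θ : Fin n → {x : ℝ // x ∈ Θ}) : Fin n → ℝ := fun j => θ j

lemma cvv_update {Θ : Finset ℝ} (t : Fin n → {x : ℝ // x ∈ Θ}) (i : Fin n)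
    (a : {x : ℝ // x ∈ Θ}) :
    cvv (Function.update t i a) = Function.update (cvv t) i (a : ℝ) := by
  funext j
  show ((Function.update t i a j : ℝ)) = Function.update (cvv t) i (a : ℝ) j
  by_cases hj : j = i
  · subst hj; rw [Function.update_self, Function.update_self]
  · rw [Function.update_of_ne hj, Function.update_of_ne hj]; rfl

lemma core_final (hn0 : 0 < n) (Θ : Finset ℝ)
    (P : Protocol n (fun _ => {x : ℝ // x ∈ Θ}) (Fin n → Bool × ℝ)) (hP : P.Consistent)
    (himp : Implements P (fun θ => FPA (show 0 < n by omega) fun j => (θ j : ℝ)))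
    (hmin : MinimallyBidderInformative P (fun i x => x i)
      (fun θ => FPA (show 0 < n by omega) fun j => (θ j : ℝ)))
    (i : Fin n) (t : Fin n → {x : ℝ // x ∈ Θ}) (a' : {x : ℝ // x ∈ Θ})
    (hoA : P.oA t = P.oA (Function.update t i a'))
    (σm σM : Fin n → {x : ℝ // x ∈ Θ})
    (hσmi : σm i = t i) (hσMi : σM i = a')
    (hoff : ∀ j, j ≠ i → σm j = σM j)
    (F1 : FPA hn0 (cvv σm) i = (false, 0))
    (F2 : FPA hn0 (cvv σM) i = (true, (a' : ℝ)))
    (hlose : FPA hn0 (cvv t) i = (false, 0)) : False := by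
  have hMBI := hmin i σm t hσmi (by
    show FPA _ (cvv σm) i = FPA _ (cvv t) i
    rw [F1, hlose])
  have hexp : P.experience i σm = P.experience i t := by
    have h2 := congrArg (fun p => p.2.1) hMBI
    simpa [Protocol.oI] using h2
  have hC := act_agree P hP i P (fun p hp => hp) t (Function.update t i a') hoA
  have hout : P.outcome σm = P.outcome σM := by
    refine outcome_eq_of_agree P hP i P (fun p hp => hp) σm σM hoff ?_
    intro q v hv f hf
    rw [hexp] at hv
    have h3 := hC q v hv f hf
    rw [Function.update_self] at h3
    rw [hσmi, hσMi]
    exact h3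
  have hFf : FPA hn0 (cvv σm) = FPA hn0 (cvv σM) := by
    have h1 := himp σm
    have h2 := himp σM
    rw [hout] at h1
    exact h1.symm.trans h2
  have h4 := congrFun hFf i
  rw [F1, F2] at h4
  exact Bool.noConfusion ((Prod.mk.injEq _ _ _ _).mp h4).1

lemma core (hn : 2 ≤ n) (Θ : Finset ℝ)
    (P : Protocol n (fun _ => {x : ℝ // x ∈ Θ}) (Fin n → Bool × ℝ)) (hP : P.Consistent)
    (himp : Implements P (fun θ => FPA (show 0 < n by omega) fun j => (θ j : ℝ)))
    (hmin : MinimallyBidderInformative P (fun i x => x i)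
      (fun θ => FPA (show 0 < n by omega) fun j => (θ j : ℝ)))
    (i : Fin n) (t : Fin n → {x : ℝ // x ∈ Θ}) (a' : {x : ℝ // x ∈ Θ})
    (hlt : (t i : ℝ) < (a' : ℝ))
    (hoA : P.oA t = P.oA (Function.update t i a')) : False := by
  have hn0 : 0 < n := by omega
  have hne : (t i : ℝ) ≠ (a' : ℝ) := ne_of_lt hlt
  -- outcomes at t and t'' coincide
  have houteq : P.outcome (Function.update t i a') = P.outcome t :=
    (oA_mix P t (Function.update t i a') (Function.update t i a') hoA (fun j => Or.inr rfl)).2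
  have hFeq : FPA hn0 (cvv t) = FPA hn0 (cvv (Function.update t i a')) := by
    have h1 := himp t
    have h2 := himp (Function.update t i a')
    rw [houteq] at h2
    exact h1.symm.trans h2
  have hcvt''i : cvv (Function.update t i a') i = (a' : ℝ) := by
    rw [cvv_update, Function.update_self]
  -- i loses at both t and t''
  have hkey := congrFun hFeq i
  have hlose : FPA hn0 (cvv t) i = (false, 0) := by
    by_cases h1 : i = lowWinner hn0 (cvv t)
    · exfalso
      by_cases h2 : i = lowWinner hn0 (cvv (Function.update t i a'))
      · simp only [FPA, if_pos h1, if_pos h2] at hkey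
        have h3 : cvv t i = cvv (Function.update t i a') i :=
          ((Prod.mk.injEq _ _ _ _).mp hkey).2
        rw [hcvt''i] at h3
        exact hne h3
      · simp only [FPA, if_pos h1, if_neg h2] at hkey
        exact Bool.noConfusion ((Prod.mk.injEq _ _ _ _).mp hkey).1
    · simp only [FPA, if_neg h1]
  have hlose'' : FPA hn0 (cvv (Function.update t i a')) i = (false, 0) := by
    rw [← hkey, hlose]
  -- the separating profile
  have zlt : (0 : ℕ) < n := hn0
  by_cases hi0 : i = (⟨0, zlt⟩ : Fin n)
  · -- case i = ⟨0⟩ : others bid a', i separates by m = t i (lose) vs a' (win)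
    have hσmv : cvv (Function.update (fun _ => a') i (t i)) =
        Function.update (fun _ => (a' : ℝ)) i ((t i : ℝ)) := by
      rw [cvv_update]; rfl
    have hσMv : cvv (Function.update (fun _ => a') i a') = fun _ => (a' : ℝ) := by
      rw [cvv_update]
      funext j
      by_cases hj : j = i
      · subst hj; rw [Function.update_self]
      · rw [Function.update_of_ne hj]; rfl
    have ho1i : (⟨1, by omega⟩ : Fin n) ≠ i := by
      rw [hi0]
      intro h
      have := congrArg Fin.val h
      simp at this
    have F1 : FPA hn0 (cvv (Function.update (fun _ => a') i (t i))) i = (false, 0) := by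
      have hwni : i ≠ lowWinner hn0 (cvv (Function.update (fun _ => a') i (t i))) := by
        intro h
        have h1 := le_lowWinner hn0 (cvv (Function.update (fun _ => a') i (t i))) ⟨1, by omega⟩
        rw [← h] at h1
        rw [hσmv] at h1
        rw [Function.update_of_ne ho1i, Function.update_self] at h1
        exact absurd h1 (not_le.mpr hlt)
      simp only [FPA, if_neg hwni]
    have F2 : FPA hn0 (cvv (Function.update (fun _ => a') i a')) i = (true, (a' : ℝ)) := by
      have hw : i = lowWinner hn0 (fun _ => (a' : ℝ)) := by
        rw [lowWinner_const hn0, hi0]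
      simp only [FPA, hσMv]
      rw [if_pos hw]
    exact core_final hn0 Θ P hP himp hmin i t a' hoA
      (Function.update (fun _ => a') i (t i)) (Function.update (fun _ => a') i a')
      (by rw [Function.update_self]) (by rw [Function.update_self])
      (fun j hj => by rw [Function.update_of_ne hj, Function.update_of_ne hj])
      F1 F2 hlose
  · -- case i ≠ 0 : others bid t i
    have hσmv : cvv (Function.update (fun _ => t i) i (t i)) = fun _ => ((t i : ℝ)) := by
      rw [cvv_update]
      funext j
      by_cases hj : j = i
      · subst hj; rw [Function.update_self]
      · rw [Function.update_of_ne hj]; rfl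
    have hσMv : cvv (Function.update (fun _ => t i) i a') =
        Function.update (fun _ => ((t i : ℝ))) i ((a' : ℝ)) := by
      rw [cvv_update]; rfl
    have F1 : FPA hn0 (cvv (Function.update (fun _ => t i) i (t i))) i = (false, 0) := by
      have hwni : i ≠ lowWinner hn0 (cvv (Function.update (fun _ => t i) i (t i))) := by
        rw [hσmv, lowWinner_const hn0]
        exact hi0
      simp only [FPA, if_neg hwni]
    have F2 : FPA hn0 (cvv (Function.update (fun _ => t i) i a')) i = (true, (a' : ℝ)) := by
      have hw : lowWinner hn0 (cvv (Function.update (fun _ => t i) i a')) = i := by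
        refine lowWinner_strict hn0 _ i fun j hj => ?_
        rw [hσMv, Function.update_of_ne hj, Function.update_self]
        exact hlt
      have hvi : cvv (Function.update (fun _ => t i) i a') i = (a' : ℝ) := by
        rw [hσMv, Function.update_self]
      simp only [FPA, if_pos hw.symm, hvi]
    exact core_final hn0 Θ P hP himp hmin i t a' hoA
      (Function.update (fun _ => t i) i (t i)) (Function.update (fun _ => t i) i a')
      (by rw [Function.update_self]) (by rw [Function.update_self])
      (fun j hj => by rw [Function.update_of_ne hj, Function.update_of_ne hj])
      F1 F2 hlose

end Core

/-- Any minimally bidder-informative protocol implementing the first-price auction choice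
rule gives the auctioneer the discrete partition: distinct type profiles induce distinct
auctioneer observations. -/
theorem fpa_min_bidder_informative_implies_discrete {n : ℕ} (hn : 2 ≤ n)
    (Θ : Finset ℝ) (hpos : ∀ x ∈ Θ, 0 ≤ x)
    (P : Protocol n (fun _ => {x : ℝ // x ∈ Θ}) (Fin n → Bool × ℝ)) (hP : P.Consistent)
    (himp : Implements P (fun θ => FPA (show 0 < n by omega) fun j => (θ j : ℝ)))
    (hmin : MinimallyBidderInformative P (fun i x => x i)
      (fun θ => FPA (show 0 < n by omega) fun j => (θ j : ℝ))) :
    ∀ θ θ' : (j : Fin n) → {x : ℝ // x ∈ Θ}, θ ≠ θ' → P.oA θ ≠ P.oA θ' := by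
  intro θ θ' hneq hoA
  obtain ⟨i, hi⟩ := Function.ne_iff.mp hneq
  set θ'' := Function.update θ i (θ' i) with hθ''
  have hmix : ∀ j, θ'' j = θ j ∨ θ'' j = θ' j := by
    intro j
    by_cases hj : j = i
    · subst hj; right; exact Function.update_self j (θ' j) θ
    · left; exact Function.update_of_ne hj _ _
  have hoA'' : P.oA θ'' = P.oA θ := (oA_mix P θ θ' θ'' hoA hmix).1
  have hsub : (θ i : ℝ) ≠ (θ' i : ℝ) := fun h => hi (Subtype.ext h)
  rcases lt_trichotomy ((θ i : ℝ)) ((θ' i : ℝ)) with hlt | heq | hgt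
  · exact core hn Θ P hP himp hmin i θ (θ' i) hlt hoA''.symm
  · exact hsub heq
  · have hθeq : Function.update θ'' i (θ i) = θ := by
      funext j
      by_cases hj : j = i
      · subst hj; exact Function.update_self j (θ j) θ''
      · rw [Function.update_of_ne hj, hθ'', Function.update_of_ne hj]
    have h1 : (θ'' i : ℝ) < (θ i : ℝ) := by
      rw [hθ'', Function.update_self]; exact hgt
    exact core hn Θ P hP himp hmin i θ'' (θ i) h1 (by rw [hθeq]; exact hoA'')


end PrivacyPaper
end

section
/- Suppose n ≥ 3 bidders share a common finite type space Θ ⊆ ℝ_{≥0} with |Θ| ≥ 5. Then for each bidder i the second-price auction choice rule admits type profiles {θ_i,θ_i'} × {θ_{-i},θ_{-i}'} that violate the indistinguishable corners condition for bidder i but do NOT violate the standard corners condition: φ^{SPA}(θ_i,θ_{-i}) = φ^{SPA}(θ_i',θ_{-i}); bidder i loses at both (θ_i,θ_{-i}) and (θ_i,θ_{-i}') (so these outcomes are ∼_{Ω_i}-equivalent) yet φ^{SPA}(θ_i,θ_{-i}) ≠ φ^{SPA}(θ_i,θ_{-i}'); and φ^{SPA}(θ_i,θ_{-i}') ≠ φ^{SPA}(θ_i',θ_{-i}').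 -/
namespace PrivacyPaper

lemma lowWinner_eq {n : ℕ} (hn : 0 < n) (θ : Fin n → ℝ) (k : Fin n)
    (h : ∀ j, j ≠ k → θ j < θ k) : lowWinner hn θ = k := by
  have hfilt : (Finset.univ.filter fun i => ∀ j, θ j ≤ θ i) = {k} := by
    ext m
    simp only [Finset.mem_filter, Finset.mem_univ, true_and, Finset.mem_singleton]
    constructor
    · intro hm
      by_contra hmk
      exact absurd (hm k) (not_le.mpr (h m hmk))
    · intro hm j
      rw [hm]
      rcases eq_or_ne j k with heq | hj
      · rw [heq]
      · exact (h j hj).le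
  simp [lowWinner, hfilt]

lemma maxOther_eq {n : ℕ} (hn : 2 ≤ n) (k : Fin n) (θ : Fin n → ℝ) (j0 : Fin n)
    (hj0 : j0 ≠ k) (M : ℝ) (hM : θ j0 = M) (hle : ∀ j, j ≠ k → θ j ≤ M) :
    maxOther hn k θ = M := by
  apply le_antisymm
  · exact Finset.sup'_le _ _ fun j hj => hle j (Finset.ne_of_mem_erase hj)
  · rw [← hM]
    exact Finset.le_sup' θ (Finset.mem_erase.mpr ⟨hj0, Finset.mem_univ _⟩)

lemma SPA_eq {n : ℕ} (hn : 2 ≤ n) (θ : Fin n → ℝ) (k : Fin n) (M : ℝ)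
    (hw : ∀ j, j ≠ k → θ j < θ k) (j0 : Fin n) (hj0 : j0 ≠ k) (hM : θ j0 = M)
    (hle : ∀ j, j ≠ k → θ j ≤ M) :
    SPA hn θ = fun m => if m = k then (true, M) else (false, 0) := by
  have hlw := lowWinner_eq (by omega : 0 < n) θ k hw
  funext m
  simp only [SPA, hlw, maxOther_eq hn k θ j0 hj0 M hM hle]

lemma SPA_profile {n : ℕ} (hn : 2 ≤ n) (i j k : Fin n)
    (hji : j ≠ i) (hki : k ≠ i) (hjk : j ≠ k)
    (v1 v5 w u M : ℝ) (h1 : v1 < v5) (hwlt : w < v5) (hult : u < v5)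
    (h1M : v1 ≤ M) (hwM : w ≤ M) (huM : u ≤ M) (hMwit : M = w ∨ M = u) :
    SPA hn (Function.update (fun m => if m = k then v5 else if m = j then w else v1) i u)
      = fun m => if m = k then (true, M) else (false, 0) := by
  set θ := Function.update (fun m => if m = k then v5 else if m = j then w else v1) i u
    with hθ
  have hθk : θ k = v5 := by
    simp [hθ, Function.update_apply, hki]
  have hθj : θ j = w := by
    simp [hθ, Function.update_apply, hji, hjk]
  have hθi : θ i = u := by simp [hθ]
  have hother : ∀ m, m ≠ k → θ m = u ∨ θ m = w ∨ θ m = v1 := by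
    intro m hm
    simp only [hθ, Function.update_apply]
    split_ifs <;> tauto
  have hw : ∀ m, m ≠ k → θ m < θ k := by
    intro m hm
    rw [hθk]
    rcases hother m hm with h | h | h <;> rw [h] <;> linarith
  have hle : ∀ m, m ≠ k → θ m ≤ M := by
    intro m hm
    rcases hother m hm with h | h | h <;> rw [h] <;> linarith
  rcases hMwit with rfl | rfl
  · exact SPA_eq hn θ k _ hw j hjk hθj hle
  · exact SPA_eq hn θ k _ hw i (Ne.symm hki) hθi hle

/-- With `n ≥ 3` bidders and a common type space of at least five values, the second-price
auction admits, for each bidder `i`, profiles violating the indistinguishable corners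
condition for `i` that do not violate the standard corners condition: bidder `i` loses at
`(a,t)` and `(a,t')` (so these outcomes are Ω_i-equivalent) yet the full outcomes there
differ, the outcome is constant in column `t`, and differs across `(a,t')`, `(a',t')`. -/
theorem spa_indist_corners_not_corners {n : ℕ} (hn : 3 ≤ n)
    (Θ : Finset ℝ) (hpos : ∀ x ∈ Θ, 0 ≤ x) (hcard : 5 ≤ Θ.card) (i : Fin n) :
    ∃ (a a' : ℝ) (t t' : Fin n → ℝ),
      a ∈ Θ ∧ a' ∈ Θ ∧ (∀ j, t j ∈ Θ) ∧ (∀ j, t' j ∈ Θ) ∧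
      SPA (by omega) (Function.update t i a) = SPA (by omega) (Function.update t i a') ∧
      SPA (by omega) (Function.update t i a) i = (false, 0) ∧
      SPA (by omega) (Function.update t' i a) i = (false, 0) ∧
      SPA (by omega) (Function.update t i a) ≠ SPA (by omega) (Function.update t' i a) ∧
      SPA (by omega) (Function.update t' i a) ≠ SPA (by omega) (Function.update t' i a') := by
  obtain ⟨s, hsub, hs5⟩ := Finset.exists_subset_card_eq hcard
  set v : Fin 5 → ℝ := fun m => (s.orderIsoOfFin hs5 m : ℝ) with hv
  have hvmem : ∀ m, v m ∈ Θ := fun m => hsub (s.orderIsoOfFin hs5 m).2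
  have hvlt : ∀ {a b : Fin 5}, a < b → v a < v b := by
    intro a b hab
    exact_mod_cast (s.orderIsoOfFin hs5).strictMono hab
  have h2 : 1 < ((Finset.univ : Finset (Fin n)).erase i).card := by
    rw [Finset.card_erase_of_mem (Finset.mem_univ _), Finset.card_univ, Fintype.card_fin]
    omega
  obtain ⟨j, hjmem, k, hkmem, hjk⟩ := Finset.one_lt_card.mp h2
  have hji : j ≠ i := Finset.ne_of_mem_erase hjmem
  have hki : k ≠ i := Finset.ne_of_mem_erase hkmem
  have h12 : v 0 < v 1 := hvlt (by decide)
  have h23 : v 1 < v 2 := hvlt (by decide)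
  have h34 : v 2 < v 3 := hvlt (by decide)
  have h45 : v 3 < v 4 := hvlt (by decide)
  have hn2 : (2 : ℕ) ≤ n := by omega
  refine ⟨v 0, v 2, (fun m => if m = k then v 4 else if m = j then v 3 else v 0),
    (fun m => if m = k then v 4 else if m = j then v 1 else v 0),
    hvmem 0, hvmem 2, ?_, ?_, ?_, ?_, ?_, ?_, ?_⟩
  · intro m; dsimp only; split_ifs
    exacts [hvmem 4, hvmem 3, hvmem 0]
  · intro m; dsimp only; split_ifs
    exacts [hvmem 4, hvmem 1, hvmem 0]
  all_goals {
    have e1 := SPA_profile hn2 i j k hji hki hjk (v 0) (v 4) (v 3) (v 0) (v 3)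
      (by linarith) (by linarith) (by linarith) (by linarith) le_rfl (by linarith) (Or.inl rfl)
    have e2 := SPA_profile hn2 i j k hji hki hjk (v 0) (v 4) (v 3) (v 2) (v 3)
      (by linarith) (by linarith) (by linarith) (by linarith) le_rfl (by linarith) (Or.inl rfl)
    have e3 := SPA_profile hn2 i j k hji hki hjk (v 0) (v 4) (v 1) (v 0) (v 1)
      (by linarith) (by linarith) (by linarith) (by linarith) le_rfl (by linarith) (Or.inl rfl)
    have e4 := SPA_profile hn2 i j k hji hki hjk (v 0) (v 4) (v 1) (v 2) (v 2)
      (by linarith) (by linarith) (by linarith) (by linarith) (by linarith) le_rfl (Or.inr rfl)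
    first
    | exact e1.trans e2.symm
    | · have h := congrFun e1 i
        rw [if_neg (Ne.symm hki)] at h
        exact h
    | · have h := congrFun e3 i
        rw [if_neg (Ne.symm hki)] at h
        exact h
    | · intro h
        have := (congrFun e1 k).symm.trans ((congrFun h k).trans (congrFun e3 k))
        simp at this
        linarith
    | · intro h
        have := (congrFun e3 k).symm.trans ((congrFun h k).trans (congrFun e4 k))
        simp at this
        linarith }

end PrivacyPaper
end

section
/- (Descending protocol uniqueness step) Fix a product set of remaining types T = T_1 × ... × T_n ⊆ Θ with each T_j nonempty, for the first-price auction with truthful bidding and lowest-index tie-breaking. There is at most one bidder i for which there exists a threshold t ∈ T_i such that every θ ∈ T with θ_i ≥ t results in bidder i winning under φ^{FPA}. -/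
namespace PrivacyPaper

/-- Descending-protocol uniqueness step: given a product set of remaining types, at most
one bidder `i` admits a threshold `c` in her remaining types such that every remaining
profile with `θ i ≥ c` results in bidder `i` winning the first-price auction. -/
theorem descending_step_unique_bidder {n : ℕ} (hn : 2 ≤ n)
    (T : Fin n → Finset ℝ) (hT : ∀ j, (T j).Nonempty) (hpos : ∀ j, ∀ x ∈ T j, 0 ≤ x)
    (i i' : Fin n)
    (hi : ∃ c ∈ T i, ∀ θ : Fin n → ℝ, (∀ j, θ j ∈ T j) → c ≤ θ i →
      lowWinner (show 0 < n by omega) θ = i)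
    (hi' : ∃ c ∈ T i', ∀ θ : Fin n → ℝ, (∀ j, θ j ∈ T j) → c ≤ θ i' →
      lowWinner (show 0 < n by omega) θ = i') :
    i = i' := by
  by_contra hne
  obtain ⟨c, hc, hwin⟩ := hi
  obtain ⟨c', hc', hwin'⟩ := hi'
  classical
  have hne' : i' ≠ i := fun h => hne h.symm
  set θ : Fin n → ℝ := fun j =>
    if j = i then c else if j = i' then c' else (hT j).choose with hθ
  have hmem : ∀ j, θ j ∈ T j := by
    intro j
    by_cases h1 : j = i
    · simp [hθ, h1, hc]
    · by_cases h2 : j = i'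
      · simp [hθ, h1, h2, hc', hne']
      · simpa [hθ, h1, h2] using (hT j).choose_spec
  have hθi : θ i = c := by simp [hθ]
  have hθi' : θ i' = c' := by simp [hθ, hne']
  have e1 := hwin θ hmem (le_of_eq hθi.symm)
  have e2 := hwin' θ hmem (le_of_eq hθi'.symm)
  exact hne (e1.symm.trans e2)

end PrivacyPaper
end

section
/- In the second-price auction with two bidders sharing a common finite type space, whenever bidder i loses, the outcome already reveals bidder i's exact value: if n = 2 and φ^{SPA}(θ_i, θ_j) = φ^{SPA}(θ_i', θ_j) with bidder i losing in both (θ_i ≤ θ_j with appropriate tie-breaking), then θ_i = θ_i'. Consequently, for n = 2 the second-price auction admits no violation of the standard corners condition for either bidder. -/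
namespace PrivacyPaper

-- aux
lemma erase_univ_two (i : Fin 2) :
    ((Finset.univ : Finset (Fin 2)).erase i) = {i.rev} := by
  fin_cases i <;> decide

lemma maxOther_two (hn : (2:ℕ) ≤ 2) (i : Fin 2) (θ : Fin 2 → ℝ) :
    maxOther hn i θ = θ i.rev := by
  simp [maxOther, erase_univ_two]

lemma spa_eq_destr {θ θ' : Fin 2 → ℝ}
    (h : SPA (le_refl 2) θ = SPA (le_refl 2) θ') :
    lowWinner (by omega) θ = lowWinner (by omega) θ' ∧
      θ (lowWinner (by omega : (0:ℕ) < 2) θ).rev = θ' (lowWinner (by omega : (0:ℕ) < 2) θ).rev := by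
  have h1 := congrFun h (lowWinner (by omega : (0:ℕ) < 2) θ)
  simp only [SPA, maxOther_two] at h1
  rw [if_pos trivial] at h1
  by_cases hww : lowWinner (by omega : (0:ℕ) < 2) θ = lowWinner (by omega : (0:ℕ) < 2) θ'
  · rw [if_pos hww] at h1
    have h2 := ((Prod.mk.injEq _ _ _ _).mp h1).2
    refine ⟨hww, ?_⟩
    rw [← hww] at h2
    exact h2
  · rw [if_neg hww] at h1
    exact absurd h1 (by simp)

lemma rev_ne (i : Fin 2) : i.rev ≠ i := by fin_cases i <;> decide

lemma eq_or_eq_rev (i j : Fin 2) : j = i ∨ j = i.rev := by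
  fin_cases i <;> fin_cases j <;> decide

lemma lose_iff {θ : Fin 2 → ℝ} {i : Fin 2} :
    SPA (le_refl 2) θ i = (false, 0) ↔ i ≠ lowWinner (by omega) θ := by
  constructor
  · intro h hi
    simp [SPA, if_pos hi] at h
  · intro h
    simp [SPA, if_neg h]

/-- With two bidders, the second-price auction outcome reveals a losing bidder's exact
value: if the outcomes at `(a, t)` and `(a', t)` agree and bidder `i` loses, then
`a = a'`. Consequently, for `n = 2` the second-price auction admits no violation of the
standard corners condition for either bidder. -/
theorem spa_two_bidders_no_corners (Θ : Finset ℝ) (hpos : ∀ x ∈ Θ, 0 ≤ x) :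
    (∀ (i : Fin 2) (a a' : ℝ) (t : Fin 2 → ℝ), a ∈ Θ → a' ∈ Θ → (∀ j, t j ∈ Θ) →
      SPA (le_refl 2) (Function.update t i a) = SPA (le_refl 2) (Function.update t i a') →
      SPA (le_refl 2) (Function.update t i a) i = (false, 0) →
      a = a') ∧
    ¬ ∃ (i : Fin 2) (a a' : ℝ) (t t' : Fin 2 → ℝ),
      a ∈ Θ ∧ a' ∈ Θ ∧ (∀ j, t j ∈ Θ) ∧ (∀ j, t' j ∈ Θ) ∧
      SPA (le_refl 2) (Function.update t i a) = SPA (le_refl 2) (Function.update t i a') ∧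
      SPA (le_refl 2) (Function.update t i a) = SPA (le_refl 2) (Function.update t' i a) ∧
      SPA (le_refl 2) (Function.update t' i a) ≠ SPA (le_refl 2) (Function.update t' i a') := by
  have key : ∀ (i : Fin 2) (a a' : ℝ) (t : Fin 2 → ℝ),
      SPA (le_refl 2) (Function.update t i a) = SPA (le_refl 2) (Function.update t i a') →
      SPA (le_refl 2) (Function.update t i a) i = (false, 0) → a = a' := by
    intro i a a' t heq hlose
    obtain ⟨hwin, hpay⟩ := spa_eq_destr heq
    have hi : i ≠ lowWinner (by omega) (Function.update t i a) := lose_iff.mp hlose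
    have hwrev : (lowWinner (by omega : (0:ℕ) < 2) (Function.update t i a)).rev = i := by
      rcases eq_or_eq_rev i (lowWinner (by omega) (Function.update t i a)) with h | h
      · exact absurd h.symm hi
      · rw [h, Fin.rev_rev]
    rw [hwrev, Function.update_self, Function.update_self] at hpay
    exact hpay
  constructor
  · intro i a a' t _ _ _ heq hlose
    exact key i a a' t heq hlose
  · rintro ⟨i, a, a', t, t', -, -, -, -, h1, h2, h3⟩
    obtain ⟨hwin, hpay⟩ := spa_eq_destr h2
    by_cases hw : lowWinner (by omega : (0:ℕ) < 2) (Function.update t i a) = i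
    · -- i wins; payments reveal the other coordinate: t i.rev = t' i.rev
      rw [hw] at hpay
      rw [Function.update_of_ne (rev_ne i), Function.update_of_ne (rev_ne i)] at hpay
      have hfun : Function.update t' i a = Function.update t i a := by
        funext j
        rcases eq_or_eq_rev i j with h | h
        · rw [h]; simp
        · rw [h, Function.update_of_ne (rev_ne i), Function.update_of_ne (rev_ne i)]
          exact hpay.symm
      have hfun' : Function.update t' i a' = Function.update t i a' := by
        funext j
        rcases eq_or_eq_rev i j with h | h
        · rw [h]; simp
        · rw [h, Function.update_of_ne (rev_ne i), Function.update_of_ne (rev_ne i)]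
          exact hpay.symm
      exact h3 (by rw [hfun, hfun']; exact h1)
    · -- i loses; part 1 gives a = a'
      have hlose : SPA (le_refl 2) (Function.update t i a) i = (false, 0) :=
        lose_iff.mpr (fun h => hw h.symm)
      have := key i a a' t h1 hlose
      rw [this] at h3
      exact h3 rfl

end PrivacyPaper
end
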